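/- Let m and n be positive integers and N = 2^(n+1)·(2m+1). Then N has at least one representation as a sum of r ≥ 2 successive odd positive numbers and at least one representation as a sum of r ≥ 2 successive even positive numbers. -/

import Mathlib

/-!
The sum of `r` successive terms `a, a + 2, …, a + 2(r - 1)` is `r * (a + r - 1)`, so a
factorisation `N = r * s` with `r ≤ s` yields such a sum starting at `a = s + 1 - r`, whose
parity is opposite to that of `r + s`. For `N = 2^(n+1) (2m+1)`, the factorisation
`2 * (2^n (2m+1))` into two factors of equal parity gives the odd sum, and
`(2m+1) * 2^(n+1)`, with the factors taken in increasing order, gives the even one.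
-/

open Finset

theorem sum_range_add_two_mul (a r : ℕ) :
    ∑ i ∈ range r, (a + 2 * i) = r * (a + r - 1) := by
  have h := Finset.sum_range_id_mul_two r
  rw [sum_add_distrib, sum_const, card_range, smul_eq_mul, ← mul_sum]
  rcases r with _ | r
  · simp
  · rw [add_tsub_cancel_right] at h
    rw [show a + (r + 1) - 1 = a + r by omega, mul_add, ← h]
    ring

theorem mul_eq_sum_range_add_two_mul {r s : ℕ} (h : r ≤ s + 1) :
    r * s = ∑ i ∈ range r, (s + 1 - r + 2 * i) := by
  rw [sum_range_add_two_mul]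
  congr 1
  omega

theorem exists_odd_sum_range_eq_mul {r s : ℕ} (hrs : r ≤ s) (h : Even (r + s)) :
    ∃ a, 0 < a ∧ Odd a ∧ r * s = ∑ i ∈ range r, (a + 2 * i) := by
  obtain ⟨k, hk⟩ := h
  exact ⟨s + 1 - r, by omega, ⟨s - k, by omega⟩, mul_eq_sum_range_add_two_mul (by omega)⟩

theorem exists_even_sum_range_eq_mul {r s : ℕ} (hrs : r ≤ s) (h : Odd (r + s)) :
    ∃ a, 0 < a ∧ Even a ∧ r * s = ∑ i ∈ range r, (a + 2 * i) := by
  obtain ⟨k, hk⟩ := h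
  exact ⟨s + 1 - r, by omega, ⟨s - k, by omega⟩, mul_eq_sum_range_add_two_mul (by omega)⟩

/-- Every number of the form 2^(n+1)·(2m+1) with m, n ≥ 1 is a sum of r ≥ 2
successive odd positive numbers and also a sum of r ≥ 2 successive even
positive numbers. -/
theorem mixed_form_has_both_sums (m n : ℕ) (hm : 0 < m) (hn : 0 < n) :
    (∃ r a : ℕ, 2 ≤ r ∧ 0 < a ∧ Odd a ∧
      2 ^ (n + 1) * (2 * m + 1) = ∑ i ∈ Finset.range r, (a + 2 * i)) ∧
    (∃ r a : ℕ, 2 ≤ r ∧ 0 < a ∧ Even a ∧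
      2 ^ (n + 1) * (2 * m + 1) = ∑ i ∈ Finset.range r, (a + 2 * i)) := by
  have hpow : 2 ≤ 2 ^ n := Nat.le_self_pow hn.ne' 2
  constructor
  · have hle : 2 ≤ 2 ^ n * (2 * m + 1) := hpow.trans (Nat.le_mul_of_pos_right _ (by omega))
    obtain ⟨a, ha, hodd, hsum⟩ := exists_odd_sum_range_eq_mul hle
      (by simp [Nat.even_add, Nat.even_pow, hn.ne'])
    exact ⟨2, a, le_rfl, ha, hodd, by rw [← hsum]; ring⟩
  · have hparity : Odd (2 * m + 1 + 2 ^ (n + 1)) := by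
      simp [Nat.odd_add, Nat.even_pow]
    rcases le_total (2 * m + 1) (2 ^ (n + 1)) with h | h
    · obtain ⟨a, ha, heven, hsum⟩ := exists_even_sum_range_eq_mul h hparity
      exact ⟨2 * m + 1, a, by omega, ha, heven, by rw [← hsum, mul_comm]⟩
    · obtain ⟨a, ha, heven, hsum⟩ :=
        exists_even_sum_range_eq_mul h (by rwa [add_comm])
      exact ⟨2 ^ (n + 1), a, by rw [pow_succ]; omega, ha, heven, hsum⟩
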